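/- arXiv:1903.04096 — 2 statements merged into one kernel-verified Lean document; each statement's English description precedes it below -/
import Mathlib

section
/- Let T ∈ {0,1}^{m×n} be a binary matrix, and define R_T ∈ {0,1}^{n×n} by (R_T)_{jk} = 0 if there exists i with T_{ik} = 0 and T_{ij} = 1, and (R_T)_{jk} = 1 otherwise; define R*_T ∈ {0,1}^{n×n} by (R*_T)_{jk} = 1 iff (R_T)_{jk} = (R_T)_{kj} = 1. Then R*_T is symmetric, R*_T ≥ I_n, the structural product satisfies T(R*_T)^{n−1} ≤ T, and (R*_T)^{n−1} = R*_T. -/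
open Matrix

/-- Structural product of binary (Boolean) matrices:
`(sprod X Z) i j = true` iff `∃ k, X i k = true ∧ Z k j = true`. -/
def sprod {m n p : ℕ} (X : Matrix (Fin m) (Fin n) Bool) (Z : Matrix (Fin n) (Fin p) Bool) :
    Matrix (Fin m) (Fin p) Bool :=
  Matrix.of fun i j => decide (∃ k, X i k = true ∧ Z k j = true)

/-- Structural power of a binary matrix, with `spow R 0 = I`. -/
def spow {n : ℕ} (R : Matrix (Fin n) (Fin n) Bool) : ℕ → Matrix (Fin n) (Fin n) Bool
  | 0 => Matrix.of fun i j => decide (i = j)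
  | k + 1 => sprod (spow R k) R

/-- `Y` belongs to the sparsity subspace `Sparse(X)`. -/
def InSparse {m n : ℕ} (X : Matrix (Fin m) (Fin n) Bool) (Y : Matrix (Fin m) (Fin n) ℝ) : Prop :=
  ∀ i j, X i j = false → Y i j = 0

/-- The binary matrix encoding the sparsity pattern of a real matrix. -/
noncomputable def Struct {m n : ℕ} (Y : Matrix (Fin m) (Fin n) ℝ) : Matrix (Fin m) (Fin n) Bool :=
  Matrix.of fun i j => decide (Y i j ≠ 0)

/-- Entrywise order on binary matrices: `leB X X'` means `X ≤ X'`. -/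
def leB {m n : ℕ} (X X' : Matrix (Fin m) (Fin n) Bool) : Prop :=
  ∀ i j, X i j = true → X' i j = true

/-!
`R_T j k = 1` says exactly that column `j` of `T` is contained in column `k`, so `R*_T j k = 1`
says that columns `j` and `k` of `T` coincide. Hence `R*_T` is an equivalence relation: it is
symmetric and reflexive, and being also transitive it is idempotent under the structural product,
so all its positive powers equal `R*_T`. Finally, right multiplication by a relation `R` with
`T R ≤ T` can only shrink `T`, so the same holds for every power of `R`.
-/

section StructuralProduct

variable {m n : ℕ}

theorem sprod_apply_eq_true {p : ℕ} {X : Matrix (Fin m) (Fin n) Bool}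
    {Z : Matrix (Fin n) (Fin p) Bool} {i : Fin m} {j : Fin p} :
    sprod X Z i j = true ↔ ∃ k, X i k = true ∧ Z k j = true := by
  simp [sprod]

theorem spow_succ (R : Matrix (Fin n) (Fin n) Bool) (p : ℕ) :
    spow R (p + 1) = sprod (spow R p) R := rfl

theorem spow_zero_apply_eq_true {R : Matrix (Fin n) (Fin n) Bool} {j k : Fin n} :
    spow R 0 j k = true ↔ j = k := by
  simp [spow]

theorem leB_sprod_spow {X : Matrix (Fin m) (Fin n) Bool} {R : Matrix (Fin n) (Fin n) Bool}
    (h : leB (sprod X R) X) : ∀ p, leB (sprod X (spow R p)) X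
  | 0 => by
    intro i j hij
    obtain ⟨k, hk, hkj⟩ := sprod_apply_eq_true.mp hij
    rwa [← spow_zero_apply_eq_true.mp hkj]
  | p + 1 => by
    intro i j hij
    obtain ⟨k, hk, hkj⟩ := sprod_apply_eq_true.mp hij
    obtain ⟨l, hkl, hlj⟩ := sprod_apply_eq_true.mp (spow_succ R p ▸ hkj)
    have hil : X i l = true := leB_sprod_spow h p i l (sprod_apply_eq_true.mpr ⟨k, hk, hkl⟩)
    exact h i j (sprod_apply_eq_true.mpr ⟨l, hil, hlj⟩)

theorem spow_one (R : Matrix (Fin n) (Fin n) Bool) : spow R 1 = R := by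
  ext j k
  rw [Bool.eq_iff_iff, spow_succ, sprod_apply_eq_true]
  simp only [spow_zero_apply_eq_true, exists_eq_left']

variable {R : Matrix (Fin n) (Fin n) Bool} (hrefl : ∀ j, R j j = true)
  (htrans : ∀ j k l, R j k = true → R k l = true → R j l = true)
include hrefl htrans

theorem sprod_self_of_refl_of_trans : sprod R R = R := by
  ext j l
  rw [Bool.eq_iff_iff, sprod_apply_eq_true]
  exact ⟨fun ⟨k, hjk, hkl⟩ => htrans j k l hjk hkl, fun hjl => ⟨j, hrefl j, hjl⟩⟩

theorem spow_succ_of_refl_of_trans : ∀ p, spow R (p + 1) = R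
  | 0 => spow_one R
  | p + 1 => by
    rw [spow_succ, spow_succ_of_refl_of_trans p, sprod_self_of_refl_of_trans hrefl htrans]

theorem spow_sub_one_of_refl_of_trans : spow R (n - 1) = R := by
  rcases n with _ | _ | n
  · ext j
    exact j.elim0
  · ext j k
    obtain rfl : j = k := Fin.ext (by omega)
    simp [spow, hrefl]
  · exact spow_succ_of_refl_of_trans hrefl htrans n

end StructuralProduct

theorem eq_true_iff_col_le_of_eq_false_iff {m n : ℕ} {T : Matrix (Fin m) (Fin n) Bool}
    {RT : Matrix (Fin n) (Fin n) Bool}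
    (hRT : ∀ j k, RT j k = false ↔ ∃ i, T i k = false ∧ T i j = true) (j k : Fin n) :
    RT j k = true ↔ ∀ i, T i j = true → T i k = true := by
  rw [← Bool.not_eq_false, hRT, not_exists]
  exact forall_congr' fun i => by cases T i j <;> cases T i k <;> simp

/-- properties of the optimized Lyapunov sparsity `R*_T`
constructed from `T` by the two-step procedure: `R*_T` is symmetric,
`R*_T ≥ Iₙ`, `T (R*_T)^{n-1} ≤ T`, and `(R*_T)^{n-1} = R*_T`. -/
theorem optimized_sparsity_properties {m n : ℕ}
    (T : Matrix (Fin m) (Fin n) Bool)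
    (RT Rstar : Matrix (Fin n) (Fin n) Bool)
    (hRT : ∀ j k, RT j k = false ↔ ∃ i, T i k = false ∧ T i j = true)
    (hRstar : ∀ j k, Rstar j k = true ↔ (RT j k = true ∧ RT k j = true)) :
    (∀ j k, Rstar j k = Rstar k j) ∧
    (∀ j, Rstar j j = true) ∧
    leB (sprod T (spow Rstar (n - 1))) T ∧
    spow Rstar (n - 1) = Rstar := by
  have hcol : ∀ j k, Rstar j k = true ↔ ∀ i, T i j = T i k := fun j k => by
    simp only [hRstar, eq_true_iff_col_le_of_eq_false_iff hRT, ← forall_and]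
    exact forall_congr' fun _ => (Bool.eq_iff_iff.trans iff_iff_implies_and_implies).symm
  have hsymm : ∀ j k, Rstar j k = Rstar k j := fun j k => by
    rw [Bool.eq_iff_iff, hcol, hcol]
    exact forall_congr' fun _ => eq_comm
  have hrefl : ∀ j, Rstar j j = true := fun j => (hcol j j).mpr fun _ => rfl
  have htrans : ∀ j k l, Rstar j k = true → Rstar k l = true → Rstar j l = true :=
    fun j k l hjk hkl => (hcol j l).mpr fun i => ((hcol j k).mp hjk i).trans ((hcol k l).mp hkl i)
  have hshrink : leB (sprod T Rstar) T := fun i j hij => by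
    obtain ⟨k, hik, hkj⟩ := sprod_apply_eq_true.mp hij
    rwa [← (hcol k j).mp hkj i]
  exact ⟨hsymm, hrefl, leB_sprod_spow hshrink _, spow_sub_one_of_refl_of_trans hrefl htrans⟩
end

section
/- Let T ∈ {0,1}^{m×n} be a binary matrix, and define R_T ∈ {0,1}^{n×n} by (R_T)_{jk} = 0 if there exists i with T_{ik} = 0 and T_{ij} = 1, and (R_T)_{jk} = 1 otherwise; define R*_T ∈ {0,1}^{n×n} by (R*_T)_{jk} = 1 iff (R_T)_{jk} = (R_T)_{kj} = 1. Then for every symmetric binary matrix R ∈ {0,1}^{n×n} with R ≥ I_n and TR^{n−1} ≤ T (structural product), one has R^{n−1} ≤ R*_T entrywise. -/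
open Matrix

lemma sprod_apply {m n p : ℕ} (X : Matrix (Fin m) (Fin n) Bool)
    (Z : Matrix (Fin n) (Fin p) Bool) (i : Fin m) (j : Fin p) :
    sprod X Z i j = true ↔ ∃ k, X i k = true ∧ Z k j = true := by
  simp [sprod]

lemma sprod_assoc {m n p q : ℕ} (X : Matrix (Fin m) (Fin n) Bool)
    (Z : Matrix (Fin n) (Fin p) Bool) (W : Matrix (Fin p) (Fin q) Bool) :
    sprod (sprod X Z) W = sprod X (sprod Z W) := by
  ext i j
  rw [Bool.eq_iff_iff, sprod_apply, sprod_apply]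
  constructor
  · rintro ⟨k, hk, hw⟩
    rw [sprod_apply] at hk
    obtain ⟨a, ha, hz⟩ := hk
    exact ⟨a, ha, (sprod_apply _ _ _ _).2 ⟨k, hz, hw⟩⟩
  · rintro ⟨a, ha, hk⟩
    rw [sprod_apply] at hk
    obtain ⟨k, hz, hw⟩ := hk
    exact ⟨k, (sprod_apply _ _ _ _).2 ⟨a, ha, hz⟩, hw⟩

lemma spow_succ_left {n : ℕ} (R : Matrix (Fin n) (Fin n) Bool) (l : ℕ) :
    spow R (l + 1) = sprod R (spow R l) := by
  induction l with
  | zero =>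
    ext i j
    rw [Bool.eq_iff_iff]
    show sprod (spow R 0) R i j = true ↔ _
    rw [sprod_apply, sprod_apply]
    constructor
    · rintro ⟨k, hk, hr⟩
      simp [spow] at hk
      subst hk
      exact ⟨j, hr, by simp [spow]⟩
    · rintro ⟨k, hr, hk⟩
      simp [spow] at hk
      subst hk
      exact ⟨i, by simp [spow], hr⟩
  | succ l ih =>
    show sprod (spow R (l+1)) R = _
    rw [ih, sprod_assoc]
    rw [← ih]
    rfl

lemma spow_symm {n : ℕ} (R : Matrix (Fin n) (Fin n) Bool)
    (hsym : ∀ i j, R i j = R j i) (l : ℕ) (i j : Fin n) :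
    spow R l i j = spow R l j i := by
  induction l generalizing i j with
  | zero => simp [spow, eq_comm]
  | succ l ih =>
    rw [Bool.eq_iff_iff]
    have h1 : spow R (l+1) i j = sprod (spow R l) R i j := rfl
    have h2 : spow R (l+1) j i = sprod R (spow R l) j i := by
      rw [spow_succ_left]
    rw [h1, h2, sprod_apply, sprod_apply]
    constructor
    · rintro ⟨k, hk, hr⟩
      exact ⟨k, (hsym j k ▸ hr : R j k = true), (ih k i ▸ hk : spow R l k i = true)⟩
    · rintro ⟨k, hr, hk⟩
      exact ⟨k, (ih i k ▸ hk : spow R l i k = true), (hsym k j ▸ hr : R k j = true)⟩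

/-- `R*_T` dominates the structural power of every admissible
Lyapunov sparsity: if `R` is symmetric binary with `R ≥ Iₙ` and
`T R^{n-1} ≤ T` (structural product), then `R^{n-1} ≤ R*_T` entrywise. -/
theorem optimized_sparsity_is_maximal {m n : ℕ}
    (T : Matrix (Fin m) (Fin n) Bool)
    (RT Rstar : Matrix (Fin n) (Fin n) Bool)
    (hRT : ∀ j k, RT j k = false ↔ ∃ i, T i k = false ∧ T i j = true)
    (hRstar : ∀ j k, Rstar j k = true ↔ (RT j k = true ∧ RT k j = true)) :
    ∀ R : Matrix (Fin n) (Fin n) Bool,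
      (∀ i j, R i j = R j i) → (∀ i, R i i = true) →
      leB (sprod T (spow R (n - 1))) T →
      leB (spow R (n - 1)) Rstar := by
  intro R hsym hrefl hle j k hjk
  rw [hRstar]
  have key : ∀ a b : Fin n, spow R (n-1) a b = true → RT a b = true := by
    intro a b hab
    by_contra h
    have hf : RT a b = false := by
      cases hh : RT a b
      · rfl
      · exact absurd hh h
    obtain ⟨i, hTk, hTj⟩ := (hRT a b).1 hf
    have : sprod T (spow R (n-1)) i b = true :=
      (sprod_apply _ _ _ _).2 ⟨a, hTj, hab⟩
    exact absurd (hle i b this) (by simp [hTk])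
  exact ⟨key j k hjk, key k j (by rw [spow_symm R hsym]; exact hjk)⟩
end
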